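/- arXiv:1301.6807 — 5 statements merged into one kernel-verified Lean document; each statement's English description precedes it below -/
import Mathlib

section
/- For every i and every pair of consecutive entries p, q (in that order) of the i-th Stern-Brocot half-sequence SB i, the cross-determinant equals 1, i.e. den(p)·num(q) − num(p)·den(q) = 1. -/
/-- The mediant of two rationals `p` and `q`: `(num p + num q) / (den p + den q)`. -/
def mediant (p q : ℚ) : ℚ := ((p.num + q.num : ℤ) : ℚ) / ((p.den + q.den : ℕ) : ℚ)

/-- Insert between every pair of consecutive entries of a list their mediant. -/
def insertMediants : List ℚ → List ℚ
  | [] => []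
  | [p] => [p]
  | p :: q :: rest => p :: mediant p q :: insertMediants (q :: rest)

/-- The Stern-Brocot half-sequences: `SB 0 = [0/1, 1/1]`, and each successive
sequence is obtained by inserting mediants between consecutive entries. -/
def SB : ℕ → List ℚ
  | 0 => [0, 1]
  | i + 1 => insertMediants (SB i)

/-!
If `p = a/b` and `q = c/d` are in lowest terms with `b c - a d = 1`, then `(a + c)` and `(b + d)`
are coprime (Bézout with coefficients `b` and `-a`), so the mediant is exactly `(a + c)/(b + d)`
in lowest terms, and both new neighbouring pairs again have cross-determinant `1`.
Since `SB 0 = [0/1, 1/1]` starts with cross-determinant `1`, induction on `i` finishes.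
-/

def crossDet (p q : ℚ) : ℤ := p.den * q.num - p.num * q.den

section Mediant

variable {p q : ℚ}

theorem isCoprime_num_add_num_den_add_den (h : crossDet p q = 1) :
    IsCoprime (p.num + q.num) ((p.den + q.den : ℕ) : ℤ) :=
  ⟨p.den, -p.num, by rw [crossDet] at h; push_cast; linarith⟩

theorem num_mediant_of_isCoprime (h : IsCoprime (p.num + q.num) ((p.den + q.den : ℕ) : ℤ)) :
    (mediant p q).num = p.num + q.num := by
  have := Rat.num_div_eq_of_coprime (by positivity) (Int.isCoprime_iff_gcd_eq_one.mp h)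
  simpa only [mediant, Int.cast_natCast] using this

theorem den_mediant_of_isCoprime (h : IsCoprime (p.num + q.num) ((p.den + q.den : ℕ) : ℤ)) :
    ((mediant p q).den : ℤ) = p.den + q.den := by
  have := Rat.den_div_eq_of_coprime (by positivity) (Int.isCoprime_iff_gcd_eq_one.mp h)
  rw [← Nat.cast_add]
  simpa only [mediant, Int.cast_natCast] using this

theorem crossDet_mediant_left (h : crossDet p q = 1) : crossDet p (mediant p q) = 1 := by
  have hcop := isCoprime_num_add_num_den_add_den h
  rw [crossDet] at h ⊢
  rw [num_mediant_of_isCoprime hcop, den_mediant_of_isCoprime hcop]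
  linarith

theorem crossDet_mediant_right (h : crossDet p q = 1) : crossDet (mediant p q) q = 1 := by
  have hcop := isCoprime_num_add_num_den_add_den h
  rw [crossDet] at h ⊢
  rw [num_mediant_of_isCoprime hcop, den_mediant_of_isCoprime hcop]
  linarith

end Mediant

theorem head?_insertMediants : ∀ l : List ℚ, (insertMediants l).head? = l.head?
  | [] | [_] | _ :: _ :: _ => rfl

theorem List.IsChain.insertMediants {R : ℚ → ℚ → Prop} {l : List ℚ} (h : l.IsChain R)
    (hR : ∀ p q, R p q → R p (mediant p q) ∧ R (mediant p q) q) :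
    (_root_.insertMediants l).IsChain R := by
  induction l using _root_.insertMediants.induct with
  | case1 => exact List.isChain_nil
  | case2 p => exact List.isChain_singleton p
  | case3 p q rest ih =>
    obtain ⟨hpq, hrest⟩ := List.isChain_cons_cons.mp h
    obtain ⟨hleft, hright⟩ := hR p q hpq
    refine List.isChain_cons_cons.mpr ⟨hleft, List.isChain_cons.mpr ⟨?_, ih hrest⟩⟩
    simpa only [head?_insertMediants, List.head?_cons, Option.mem_def, Option.some.injEq,
      forall_eq'] using hright

theorem isChain_crossDet_SB (i : ℕ) : (SB i).IsChain (fun p q => crossDet p q = 1) := by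
  induction i with
  | zero => simp [SB, crossDet]
  | succ i ih =>
    exact ih.insertMediants fun _ _ h => ⟨crossDet_mediant_left h, crossDet_mediant_right h⟩

/-- For every pair of consecutive entries `p, q` of the `i`-th Stern-Brocot half-sequence,
the cross-determinant `den p * num q - num p * den q` equals `1`. -/
theorem sternBrocot_crossDeterminant_eq_one (i j : ℕ) (hj : j + 1 < (SB i).length) :
    ((SB i)[j].den : ℤ) * (SB i)[j + 1].num - (SB i)[j].num * ((SB i)[j + 1].den : ℤ) = 1 :=
  List.isChain_iff_getElem.mp (isChain_crossDet_SB i) j hj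
end

section
/- The Stern-Brocot half-sequences are algebraically symmetric: for every i and every index j with 0 ≤ j ≤ 2^i, the j-th entry and the (2^i − j)-th entry of SB i add up to 1, i.e. SB i [j] + SB i [2^i − j] = 1. -/
/-!
The reflection `x ↦ 1 - x` keeps the denominator of a rational and sends its numerator `n` to
`den - n`, so it reverses mediants: `mediant (1 - b) (1 - a) = 1 - mediant a b`. Hence reflecting
every entry of a list and reversing it commutes with inserting mediants. Since `SB 0 = [0, 1]` is
fixed by this operation, so is every `SB i`, and reading that off entrywise gives the theorem.
-/

theorem Rat.den_one_sub (x : ℚ) : (1 - x).den = x.den := by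
  simp

theorem Rat.num_one_sub (x : ℚ) : (1 - x).num = x.den - x.num := by
  have h := Rat.mul_den_eq_num (1 - x)
  rw [Rat.den_one_sub, sub_mul, one_mul, Rat.mul_den_eq_num] at h
  exact_mod_cast h.symm

theorem mediant_one_sub_one_sub (a b : ℚ) : mediant (1 - b) (1 - a) = 1 - mediant a b := by
  have hden : ((a.den + b.den : ℕ) : ℚ) ≠ 0 := by positivity
  simp only [mediant, Rat.num_one_sub, Rat.den_one_sub]
  rw [add_comm b.den, eq_sub_iff_add_eq, ← add_div, div_eq_one_iff_eq hden]
  push_cast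
  ring

theorem length_insertMediants (l : List ℚ) :
    (insertMediants l).length = 2 * l.length - 1 := by
  induction l using insertMediants.induct with
  | case1 | case2 => simp [insertMediants]
  | case3 p q rest ih =>
    simp only [insertMediants, List.length_cons] at ih ⊢
    omega

theorem length_SB (i : ℕ) : (SB i).length = 2 ^ i + 1 := by
  induction i with
  | zero => rfl
  | succ i ih =>
    rw [SB, length_insertMediants, ih, pow_succ]
    omega

theorem insertMediants_append_pair (l : List ℚ) (a b : ℚ) :
    insertMediants (l ++ [a, b]) = insertMediants (l ++ [a]) ++ [mediant a b, b] := by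
  induction l using insertMediants.induct with
  | case1 => rfl
  | case2 p => rfl
  | case3 p q rest ih =>
    simp only [List.cons_append, insertMediants] at ih ⊢
    rw [ih]

theorem insertMediants_reverse_map {g : ℚ → ℚ} (hg : ∀ a b, mediant (g b) (g a) = g (mediant a b))
    (l : List ℚ) : insertMediants (l.map g).reverse = ((insertMediants l).map g).reverse := by
  induction l using insertMediants.induct with
  | case1 | case2 => rfl
  | case3 p q rest ih =>
    have hsnoc : ((q :: rest).map g).reverse = (rest.map g).reverse ++ [g q] := by simp
    rw [List.map_cons, List.reverse_cons, hsnoc, List.append_assoc, List.singleton_append,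
      insertMediants_append_pair, ← hsnoc, ih, insertMediants, hg]
    simp

theorem SB_reverse_map_one_sub (i : ℕ) : ((SB i).map (1 - ·)).reverse = SB i := by
  induction i with
  | zero => norm_num [SB]
  | succ i ih =>
    rw [SB, ← insertMediants_reverse_map mediant_one_sub_one_sub, ih]

theorem List.getD_add_getD_length_sub_of_reverse_map_one_sub {l : List ℚ}
    (hl : (l.map (1 - ·)).reverse = l) {j : ℕ} (hj : j < l.length) :
    l.getD j 0 + l.getD (l.length - 1 - j) 0 = 1 := by
  have hmirror : l[j] = 1 - l[l.length - 1 - j] := by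
    rw [List.getElem_of_eq hl.symm hj]
    simp
  rw [List.getD_eq_getElem _ _ hj, List.getD_eq_getElem _ _ (by omega), hmirror]
  ring

/-- Stern-Brocot half-sequences are algebraically symmetric: for `0 ≤ j ≤ 2 ^ i`,
the `j`-th entry and the `(2 ^ i - j)`-th entry of `SB i` add up to `1`. -/
theorem sternBrocot_symmetric (i j : ℕ) (hj : j ≤ 2 ^ i) :
    (SB i).getD j 0 + (SB i).getD (2 ^ i - j) 0 = 1 := by
  have h := List.getD_add_getD_length_sub_of_reverse_map_one_sub (SB_reverse_map_one_sub i)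
    (j := j) (by rw [length_SB]; omega)
  rwa [length_SB, Nat.add_sub_cancel] at h
end

section
/- For every i and every index j with 0 ≤ j ≤ 2^i, the numerator of the j-th entry of SB (i+1) equals the numerator of the j-th entry of SB i, and the denominator of the j-th entry of SB (i+1) equals the numerator of the j-th entry of SB i plus the denominator of the j-th entry of SB i. That is, num(SB (i+1) [j]) = num(SB i [j]) and den(SB (i+1) [j]) = num(SB i [j]) + den(SB i [j]). -/
/-!
Consecutive entries `p, q` of every `SB i` are Farey neighbours
(`num q * den p - num p * den q = 1`), so the fraction defining their mediant is already in
lowest terms and its numerator and denominator are the sums of those of `p` and `q`.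
Since the even-indexed entries of `SB (i+1)` are the entries of `SB i` and the odd-indexed
ones are mediants of consecutive entries of `SB i`, both the Farey property and the
recursion `(num, den) ↦ (num, num + den)` pass from `SB i` to `SB (i+1)` by induction on `i`,
splitting on the parity of the index.
-/

def FareyNeighbours (p q : ℚ) : Prop := q.num * p.den - p.num * q.den = 1

section Mediant

variable {p q : ℚ}

theorem FareyNeighbours.num_den_mediant (h : FareyNeighbours p q) :
    (mediant p q).num = p.num + q.num ∧ ((mediant p q).den : ℤ) = p.den + q.den := by
  have hpos : (0 : ℤ) < p.den + q.den := by positivity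
  unfold FareyNeighbours at h
  have hcop : IsCoprime (p.num + q.num) ((p.den : ℤ) + q.den) := ⟨-q.den, q.num, by linarith⟩
  have hcop' := Int.isCoprime_iff_gcd_eq_one.mp hcop
  have hmed : mediant p q = ((p.num + q.num : ℤ) : ℚ) / ((p.den + q.den : ℤ) : ℚ) := by
    simp [mediant]
  rw [hmed]
  exact ⟨Rat.num_div_eq_of_coprime hpos hcop', Rat.den_div_eq_of_coprime hpos hcop'⟩

theorem FareyNeighbours.mediant_right (h : FareyNeighbours p q) :
    FareyNeighbours p (mediant p q) := by
  obtain ⟨hnum, hden⟩ := h.num_den_mediant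
  unfold FareyNeighbours at h ⊢
  rw [hnum, hden]
  linarith

theorem FareyNeighbours.mediant_left (h : FareyNeighbours p q) :
    FareyNeighbours (mediant p q) q := by
  obtain ⟨hnum, hden⟩ := h.num_den_mediant
  unfold FareyNeighbours at h ⊢
  rw [hnum, hden]
  linarith

end Mediant

theorem length_insertMediants_cons (p : ℚ) (l : List ℚ) :
    (insertMediants (p :: l)).length = 2 * l.length + 1 := by
  induction l generalizing p with
  | nil => rfl
  | cons q rest ih => simp [insertMediants, ih q]; ring

theorem insertMediants_getD_two_mul (l : List ℚ) (k : ℕ) :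
    (insertMediants l).getD (2 * k) 0 = l.getD k 0 := by
  induction l using insertMediants.induct generalizing k with
  | case1 => rfl
  | case2 p => cases k <;> simp [insertMediants]
  | case3 p q rest ih =>
    cases k with
    | zero => rfl
    | succ m => simpa [insertMediants, Nat.mul_succ] using ih m

theorem insertMediants_getD_two_mul_add_one {l : List ℚ} {k : ℕ} (hk : k + 1 < l.length) :
    (insertMediants l).getD (2 * k + 1) 0 = mediant (l.getD k 0) (l.getD (k + 1) 0) := by
  induction l using insertMediants.induct generalizing k with
  | case1 => simp at hk
  | case2 p => simp at hk
  | case3 p q rest ih =>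
    cases k with
    | zero => rfl
    | succ m =>
      have hm : m + 1 < (q :: rest).length := by simpa using hk
      simpa [insertMediants, Nat.mul_succ] using ih hm

theorem SB_succ_getD_two_mul (i k : ℕ) : (SB (i + 1)).getD (2 * k) 0 = (SB i).getD k 0 :=
  insertMediants_getD_two_mul _ k

theorem SB_succ_getD_two_mul_add_one {i k : ℕ} (hk : k + 1 ≤ 2 ^ i) :
    (SB (i + 1)).getD (2 * k + 1) 0 = mediant ((SB i).getD k 0) ((SB i).getD (k + 1) 0) :=
  insertMediants_getD_two_mul_add_one (by rw [length_SB]; omega)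

theorem fareyNeighbours_SB_getD {i k : ℕ} (hk : k + 1 ≤ 2 ^ i) :
    FareyNeighbours ((SB i).getD k 0) ((SB i).getD (k + 1) 0) := by
  induction i generalizing k with
  | zero =>
    obtain rfl : k = 0 := by simpa using hk
    rfl
  | succ i ih =>
    rw [pow_succ] at hk
    obtain ⟨m, rfl | rfl⟩ := Nat.even_or_odd' k
    · have hm : m + 1 ≤ 2 ^ i := by omega
      rw [SB_succ_getD_two_mul, SB_succ_getD_two_mul_add_one hm]
      exact (ih hm).mediant_right
    · have hm : m + 1 ≤ 2 ^ i := by omega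
      rw [show 2 * m + 1 + 1 = 2 * (m + 1) by ring, SB_succ_getD_two_mul,
        SB_succ_getD_two_mul_add_one hm]
      exact (ih hm).mediant_left

/-- For `0 ≤ j ≤ 2 ^ i`: the numerator of the `j`-th entry of `SB (i+1)` equals the
numerator of the `j`-th entry of `SB i`, and its denominator equals the numerator plus
the denominator of the `j`-th entry of `SB i`. -/
theorem sternBrocot_num_den_recursion (i j : ℕ) (hj : j ≤ 2 ^ i) :
    ((SB (i + 1)).getD j 0).num = ((SB i).getD j 0).num ∧
    (((SB (i + 1)).getD j 0).den : ℤ) =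
      ((SB i).getD j 0).num + (((SB i).getD j 0).den : ℤ) := by
  induction i generalizing j with
  | zero =>
    interval_cases j <;> norm_num [SB, insertMediants, mediant]
  | succ i ih =>
    rw [pow_succ] at hj
    obtain ⟨k, rfl | rfl⟩ := Nat.even_or_odd' j
    · rw [SB_succ_getD_two_mul, SB_succ_getD_two_mul]
      exact ih k (by omega)
    · have hk : k + 1 ≤ 2 ^ i := by omega
      have hk' : k + 1 ≤ 2 ^ (i + 1) := by rw [pow_succ]; omega
      rw [SB_succ_getD_two_mul_add_one hk', SB_succ_getD_two_mul_add_one hk]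
      obtain ⟨hnum, hden⟩ := (fareyNeighbours_SB_getD hk).num_den_mediant
      obtain ⟨hnum', hden'⟩ := (fareyNeighbours_SB_getD hk').num_den_mediant
      obtain ⟨hk_num, hk_den⟩ := ih k (by omega)
      obtain ⟨hk1_num, hk1_den⟩ := ih (k + 1) hk
      rw [hnum, hden, hnum', hden']
      constructor <;> linarith
end

section
/- Every rational number q with 0 ≤ q ≤ 1 appears as an entry of the i-th Stern-Brocot half-sequence SB i for some i (and hence in every subsequent one). -/
/-! Consecutive entries `a < b` of every `SB i` are Farey neighbours,
`b.num * a.den - a.num * b.den = 1`; this is preserved by taking mediants, and it makes the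
mediant `(a.num + b.num) / (a.den + b.den)` already reduced. If `a < q < b` for Farey
neighbours, then
`a.den * (b.num * q.den - q.num * b.den) + b.den * (q.num * a.den - a.num * q.den) = q.den`
with both brackets positive integers, so `a.den + b.den ≤ q.den`. Starting from `0 < q < 1`
and repeatedly replacing the bracketing pair by the half `[a, mediant a b]` or
`[mediant a b, b]` containing `q`, the sum of denominators strictly grows while staying at
most `q.den`, so `q` must eventually be one of the mediants. -/

def FareyNeighbors (a b : ℚ) : Prop := b.num * a.den - a.num * b.den = 1

namespace FareyNeighbors

variable {a b q : ℚ}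

theorem mediant_num_den (h : FareyNeighbors a b) :
    (mediant a b).num = a.num + b.num ∧ (mediant a b).den = a.den + b.den := by
  have hpos : (0 : ℤ) < a.den + b.den := by positivity
  have hcop : IsCoprime (a.num + b.num) (a.den + b.den : ℤ) :=
    ⟨-b.den, b.num, by unfold FareyNeighbors at h; linear_combination h⟩
  have hgcd := Int.isCoprime_iff_gcd_eq_one.1 hcop
  have hnum := Rat.num_div_eq_of_coprime hpos hgcd
  have hden := Rat.den_div_eq_of_coprime hpos hgcd
  push_cast [mediant] at hnum hden ⊢
  exact ⟨hnum, by exact_mod_cast hden⟩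

theorem mediant_left (h : FareyNeighbors a b) : FareyNeighbors a (mediant a b) := by
  obtain ⟨hn, hd⟩ := h.mediant_num_den
  unfold FareyNeighbors at h ⊢
  rw [hn, hd]; push_cast; linear_combination h

theorem mediant_right (h : FareyNeighbors a b) : FareyNeighbors (mediant a b) b := by
  obtain ⟨hn, hd⟩ := h.mediant_num_den
  unfold FareyNeighbors at h ⊢
  rw [hn, hd]; push_cast; linear_combination h

theorem add_den_le (h : FareyNeighbors a b) (haq : a < q) (hqb : q < b) :
    a.den + b.den ≤ q.den := by
  rw [Rat.lt_iff] at haq hqb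
  unfold FareyNeighbors at h
  have key : (a.den : ℤ) * (b.num * q.den - q.num * b.den)
      + b.den * (q.num * a.den - a.num * q.den) = q.den := by
    linear_combination (q.den : ℤ) * h
  have : (a.den + b.den : ℤ) ≤ q.den := by nlinarith
  exact_mod_cast this

end FareyNeighbors

theorem exists_insertMediants_cons_eq_cons (q : ℚ) (l : List ℚ) :
    ∃ t, insertMediants (q :: l) = q :: t := by
  cases l <;> exact ⟨_, rfl⟩

theorem infix_insertMediants {a b : ℚ} {l : List ℚ} (h : [a, b] <:+: l) :
    [a, mediant a b, b] <:+: insertMediants l := by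
  induction l using insertMediants.induct with
  | case1 => exact absurd h.length_le (by simp)
  | case2 => exact absurd h.length_le (by simp)
  | case3 p q rest ih =>
    obtain ⟨t, ht⟩ := exists_insertMediants_cons_eq_cons q rest
    rw [insertMediants, ht]
    rcases List.infix_cons_iff.1 h with hpre | hinf
    · simp only [List.cons_prefix_cons, List.nil_prefix, and_true] at hpre
      obtain ⟨rfl, rfl⟩ := hpre
      exact (by simp : [a, mediant a b, b] <+: _).isInfix
    · exact List.infix_cons (List.infix_cons (ht ▸ ih hinf))

theorem isChain_insertMediants {l : List ℚ} (h : l.IsChain FareyNeighbors) :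
    (insertMediants l).IsChain FareyNeighbors := by
  induction l using insertMediants.induct with
  | case1 | case2 => exact h
  | case3 p q rest ih =>
    rw [List.isChain_cons_cons] at h
    obtain ⟨t, ht⟩ := exists_insertMediants_cons_eq_cons q rest
    have hrest := ih h.2
    rw [ht] at hrest
    rw [insertMediants, ht, List.isChain_cons_cons, List.isChain_cons_cons]
    exact ⟨h.1.mediant_left, h.1.mediant_right, hrest⟩

theorem isChain_SB (i : ℕ) : (SB i).IsChain FareyNeighbors := by
  induction i with
  | zero => simp [SB, FareyNeighbors]
  | succ i ih => exact isChain_insertMediants ih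

theorem exists_mem_SB_of_infix {q a b : ℚ} {i : ℕ} (hab : [a, b] <:+: SB i)
    (haq : a < q) (hqb : q < b) : ∃ j, q ∈ SB j := by
  have hadj : FareyNeighbors a b := List.isChain_pair.1 ((isChain_SB i).infix hab)
  have hinf : [a, mediant a b, b] <:+: SB (i + 1) := infix_insertMediants hab
  rcases lt_trichotomy q (mediant a b) with hlt | heq | hgt
  · exact exists_mem_SB_of_infix ((by simp : [a, mediant a b] <+: _).isInfix.trans hinf) haq hlt
  · exact ⟨i + 1, heq ▸ hinf.subset (by simp)⟩
  · exact exists_mem_SB_of_infix ((List.suffix_cons _ _).isInfix.trans hinf) hgt hqb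
termination_by q.den - (a.den + b.den)
decreasing_by
  all_goals
    have := hadj.mediant_num_den.2
    have := a.den_pos
    have := b.den_pos
  · have := hadj.mediant_left.add_den_le haq hlt
    omega
  · have := hadj.mediant_right.add_den_le hgt hqb
    omega

/-- Every rational number `q` with `0 ≤ q ≤ 1` appears in some Stern-Brocot
half-sequence. -/
theorem sternBrocot_mem_of_mem_unitInterval (q : ℚ) (h0 : 0 ≤ q) (h1 : q ≤ 1) :
    ∃ i, q ∈ SB i := by
  rcases h0.eq_or_lt with rfl | h0
  · exact ⟨0, by simp [SB]⟩
  rcases h1.eq_or_lt with rfl | h1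
  · exact ⟨0, by simp [SB]⟩
  exact exists_mem_SB_of_infix (List.infix_refl (SB 0)) h0 h1
end

section
/- Let a, b, c, d be nonnegative integers with b, d positive, gcd(a,b) = 1, gcd(c,d) = 1, and D = bc − ad > 0. Then there exists a positive integer V such that for all positive coprime integers x and y, gcd(a·x + c·y, b·x + d·y) = gcd(D·y, x + V·y). -/
/-!
Put `D = bc - ad` and choose `V` with `aV ≡ c` and `bV ≡ d` modulo `D`; a Bézout relation
`ra + sb = 1` shows that `V ≡ rc + sd` works. Writing `aV - c = D kₐ` and `bV - d = D k_b`,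
we get `ax + cy = a(x + Vy) - kₐ(Dy)` and `bx + dy = b(x + Vy) - k_b(Dy)`, while
`D(b kₐ - a k_b) = b(aV - c) - a(bV - d) = -D`. So this integral change of variables has
determinant `-1` and therefore preserves gcds.
-/

theorem Int.gcd_eq_gcd_of_isUnit_det {p q r s : ℤ} (hdet : IsUnit (p * s - q * r)) (m n : ℤ) :
    Int.gcd (p * m + q * n) (r * m + s * n) = Int.gcd m n := by
  refine Nat.dvd_antisymm ?_ ?_
  · have hu := Int.gcd_dvd_left (p * m + q * n) (r * m + s * n)
    have hv := Int.gcd_dvd_right (p * m + q * n) (r * m + s * n)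
    have hm : (p * s - q * r) * m = s * (p * m + q * n) - q * (r * m + s * n) := by ring
    have hn : (p * s - q * r) * n = p * (r * m + s * n) - r * (p * m + q * n) := by ring
    refine Int.dvd_gcd (hdet.dvd_mul_left.mp ?_) (hdet.dvd_mul_left.mp ?_)
    · rw [hm]; exact dvd_sub (hu.mul_left _) (hv.mul_left _)
    · rw [hn]; exact dvd_sub (hv.mul_left _) (hu.mul_left _)
  · have hm := Int.gcd_dvd_left m n
    have hn := Int.gcd_dvd_right m n
    exact Int.dvd_gcd (dvd_add (hm.mul_left _) (hn.mul_left _))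
      (dvd_add (hm.mul_left _) (hn.mul_left _))

theorem Int.gcd_add_mul_eq_gcd_of_modEq {a b c d V : ℤ} (hD : b * c - a * d ≠ 0)
    (haV : a * V ≡ c [ZMOD b * c - a * d]) (hbV : b * V ≡ d [ZMOD b * c - a * d]) (x y : ℤ) :
    Int.gcd (a * x + c * y) (b * x + d * y) = Int.gcd ((b * c - a * d) * y) (x + V * y) := by
  obtain ⟨ka, hka⟩ := haV.symm.dvd
  obtain ⟨kb, hkb⟩ := hbV.symm.dvd
  have hdet : a * -kb - -ka * b = -1 :=
    mul_left_cancel₀ hD (by linear_combination a * hkb - b * hka)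
  have hu : a * x + c * y = a * (x + V * y) + -ka * ((b * c - a * d) * y) := by
    linear_combination -y * hka
  have hv : b * x + d * y = b * (x + V * y) + -kb * ((b * c - a * d) * y) := by
    linear_combination -y * hkb
  rw [hu, hv, Int.gcd_eq_gcd_of_isUnit_det (hdet ▸ isUnit_one.neg), Int.gcd_comm]

theorem Int.exists_pos_natCast_modEq {n : ℤ} (hn : n ≠ 0) (z : ℤ) :
    ∃ V : ℕ, 0 < V ∧ (V : ℤ) ≡ z [ZMOD n] := by
  have hmod := Int.emod_nonneg z hn
  have habs : 0 < |n| := abs_pos.mpr hn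
  refine ⟨(z % n + |n|).toNat, by omega, ?_⟩
  rw [Int.toNat_of_nonneg (by omega)]
  simpa using (Int.mod_modEq z n).add (Int.modEq_zero_iff_dvd.mpr (self_dvd_abs n))

theorem Int.exists_pos_modEq_of_isCoprime {a b : ℤ} (hab : IsCoprime a b) (c d : ℤ)
    (hD : b * c - a * d ≠ 0) :
    ∃ V : ℕ, 0 < V ∧ a * V ≡ c [ZMOD b * c - a * d] ∧ b * V ≡ d [ZMOD b * c - a * d] := by
  obtain ⟨r, s, hrs⟩ := hab
  obtain ⟨V, hV, hVmod⟩ := Int.exists_pos_natCast_modEq hD (r * c + s * d)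
  have haV₀ : a * (r * c + s * d) ≡ c [ZMOD b * c - a * d] :=
    (Int.modEq_iff_dvd.mpr ⟨-s, by linear_combination c * hrs⟩).symm
  have hbV₀ : b * (r * c + s * d) ≡ d [ZMOD b * c - a * d] :=
    (Int.modEq_iff_dvd.mpr ⟨r, by linear_combination d * hrs⟩).symm
  exact ⟨V, hV, (hVmod.mul_left a).trans haV₀, (hVmod.mul_left b).trans hbV₀⟩

theorem exists_V_gcd_eq_general (a b c d : ℕ)
    (hab : Nat.gcd a b = 1) (hD : a * d < b * c) :
    ∃ V : ℕ, 0 < V ∧ ∀ x y : ℕ, 0 < x → 0 < y → Nat.gcd x y = 1 →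
      Nat.gcd (a * x + c * y) (b * x + d * y) =
        Nat.gcd ((b * c - a * d) * y) (x + V * y) := by
  have hDℤ : (b : ℤ) * c - a * d ≠ 0 := by
    have : (a : ℤ) * d < b * c := by exact_mod_cast hD
    omega
  obtain ⟨V, hV, haV, hbV⟩ :=
    Int.exists_pos_modEq_of_isCoprime (Nat.isCoprime_iff_coprime.mpr hab) c d hDℤ
  refine ⟨V, hV, fun x y _ _ _ => ?_⟩
  have key := Int.gcd_add_mul_eq_gcd_of_modEq hDℤ haV hbV x y
  rw [← Int.gcd_natCast_natCast, ← Int.gcd_natCast_natCast]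
  push_cast [Nat.cast_sub hD.le]
  exact key

/-- If `a/b` and `c/d` are in lowest terms with cross-determinant `D = bc - ad > 0`,
there is a positive integer `V` such that for all positive coprime `x, y`,
`gcd (ax + cy) (bx + dy) = gcd (Dy) (x + Vy)`. -/
theorem exists_V_gcd_eq (a b c d : ℕ) (hb : 0 < b) (hd : 0 < d)
    (hab : Nat.gcd a b = 1) (hcd : Nat.gcd c d = 1) (hD : a * d < b * c) :
    ∃ V : ℕ, 0 < V ∧ ∀ x y : ℕ, 0 < x → 0 < y → Nat.gcd x y = 1 →
      Nat.gcd (a * x + c * y) (b * x + d * y) =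
        Nat.gcd ((b * c - a * d) * y) (x + V * y) :=
  exists_V_gcd_eq_general a b c d hab hD
end
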